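/- arXiv:1503.04106 — 9 statements merged into one kernel-verified Lean document; each statement's English description precedes it below -/
import Mathlib

section
/- Let n ≥ 4 be an even integer. Then the DCT-I matrix satisfies the factorization C^I_{n+1} = P_{n+1}^T · blkdiag(C^I_{n/2+1}, C^III_{n/2}) · Ĥ_{n+1}, where blkdiag(A,B) denotes the block-diagonal matrix with diagonal blocks A and B. -/
open Matrix Real

/-- `ε_n(j)`: `1/√2` if `j = 0` or `j = n`, else `1`. -/
noncomputable def eps (n j : ℕ) : ℝ := if j = 0 ∨ j = n then 1 / Real.sqrt 2 else 1

/-- DCT-I matrix of size `(n+1) × (n+1)`. -/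
noncomputable def C1 (n : ℕ) : Matrix (Fin (n + 1)) (Fin (n + 1)) ℝ := fun j k =>
  Real.sqrt (2 / n) * eps n j.val * eps n k.val *
    Real.cos (((j.val * k.val : ℕ) : ℝ) * Real.pi / n)

/-- DCT-II matrix of size `n × n`. -/
noncomputable def C2 (n : ℕ) : Matrix (Fin n) (Fin n) ℝ := fun j k =>
  Real.sqrt (2 / n) * eps n j.val *
    Real.cos (((j.val * (2 * k.val + 1) : ℕ) : ℝ) * Real.pi / (2 * n))

/-- DCT-III matrix: transpose of DCT-II. -/
noncomputable def C3 (n : ℕ) : Matrix (Fin n) (Fin n) ℝ := (C2 n)ᵀ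

/-- DCT-IV matrix of size `n × n`. -/
noncomputable def C4 (n : ℕ) : Matrix (Fin n) (Fin n) ℝ := fun j k =>
  Real.sqrt (2 / n) *
    Real.cos ((((2 * j.val + 1) * (2 * k.val + 1) : ℕ) : ℝ) * Real.pi / (4 * n))

/-- Block-diagonal matrix with diagonal blocks `A` (size `p`) and `B` (size `q`),
viewed as a matrix of size `n` (intended for `n = p + q`). -/
noncomputable def blkdiag {n p q : ℕ} (A : Matrix (Fin p) (Fin p) ℝ)
    (B : Matrix (Fin q) (Fin q) ℝ) : Matrix (Fin n) (Fin n) ℝ := fun i j =>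
  if hi : i.val < p then
    if hj : j.val < p then A ⟨i.val, hi⟩ ⟨j.val, hj⟩ else 0
  else
    if j.val < p then 0
    else
      if hi' : i.val - p < q then
        if hj' : j.val - p < q then B ⟨i.val - p, hi'⟩ ⟨j.val - p, hj'⟩ else 0
      else 0

/-- `2×2` block matrix `[[A, B], [C, D]]` with square blocks of size `p`,
viewed as a matrix of size `n` (intended for `n = p + p`). -/
noncomputable def blk4 {n p : ℕ} (A B C D : Matrix (Fin p) (Fin p) ℝ) :
    Matrix (Fin n) (Fin n) ℝ := fun i j =>
  if hi : i.val < p then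
    if hj : j.val < p then A ⟨i.val, hi⟩ ⟨j.val, hj⟩
    else if hj' : j.val - p < p then B ⟨i.val, hi⟩ ⟨j.val - p, hj'⟩ else 0
  else if hi' : i.val - p < p then
    if hj : j.val < p then C ⟨i.val - p, hi'⟩ ⟨j.val, hj⟩
    else if hj' : j.val - p < p then D ⟨i.val - p, hi'⟩ ⟨j.val - p, hj'⟩ else 0
  else 0

/-- Flip (anti-diagonal) matrix `Ĩ_m`. -/
noncomputable def flipMat (m : ℕ) : Matrix (Fin m) (Fin m) ℝ := fun i j =>
  if i.val + j.val + 1 = m then 1 else 0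

/-- Diagonal sign matrix `D_m = diag((-1)^k)`. -/
noncomputable def Dmat (m : ℕ) : Matrix (Fin m) (Fin m) ℝ :=
  Matrix.diagonal fun k => (-1 : ℝ) ^ (k.val)

/-- Even-odd permutation matrix `P_n` for even `n`:
`P_n x = (x_0, x_2, …, x_{n-2}, x_1, x_3, …, x_{n-1})`. -/
noncomputable def Pev (n : ℕ) : Matrix (Fin n) (Fin n) ℝ := fun i j =>
  if j.val = (if i.val < n / 2 then 2 * i.val else 2 * (i.val - n / 2) + 1) then 1 else 0

/-- Even-odd permutation matrix `P_{n+1}` of odd size `n+1` (for even `n`):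
`P_{n+1} x = (x_0, x_2, …, x_n, x_1, x_3, …, x_{n-1})`. -/
noncomputable def Podd (n : ℕ) : Matrix (Fin (n + 1)) (Fin (n + 1)) ℝ := fun i j =>
  if j.val = (if i.val ≤ n / 2 then 2 * i.val else 2 * (i.val - n / 2) - 1) then 1 else 0

/-- Butterfly matrix `H_n = (1/√2)[[I, Ĩ], [I, -Ĩ]]` with blocks of size `n/2`. -/
noncomputable def Hmat (n : ℕ) : Matrix (Fin n) (Fin n) ℝ :=
  (1 / Real.sqrt 2) •
    blk4 (1 : Matrix (Fin (n / 2)) (Fin (n / 2)) ℝ) (flipMat (n / 2)) 1 (-(flipMat (n / 2)))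

/-- Butterfly matrix `Ĥ_{n+1} = (1/√2)[[I, 0, Ĩ], [0, √2, 0], [I, 0, -Ĩ]]`
with corner blocks of size `n/2` and middle row/column indexed by `n/2`. -/
noncomputable def Hbrev (n : ℕ) : Matrix (Fin (n + 1)) (Fin (n + 1)) ℝ := fun i j =>
  (1 / Real.sqrt 2) *
    (if i.val < n / 2 then
      (if j.val < n / 2 then (if i.val = j.val then 1 else 0)
       else if j.val = n / 2 then 0
       else if i.val + (j.val - (n / 2 + 1)) + 1 = n / 2 then 1 else 0)
     else if i.val = n / 2 then (if j.val = n / 2 then Real.sqrt 2 else 0)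
     else
      (if j.val < n / 2 then (if i.val - (n / 2 + 1) = j.val then 1 else 0)
       else if j.val = n / 2 then 0
       else -(if (i.val - (n / 2 + 1)) + (j.val - (n / 2 + 1)) + 1 = n / 2 then 1 else 0)))

/-- The matrix `U_n`. -/
noncomputable def Umat (n : ℕ) : Matrix (Fin n) (Fin n) ℝ :=
  (blkdiag (n := n) (1 : Matrix (Fin 1) (Fin 1) ℝ)
    (blkdiag (n := n - 1)
      ((1 / Real.sqrt 2) • blk4 (n := n - 2)
        (1 : Matrix (Fin (n / 2 - 1)) (Fin (n / 2 - 1)) ℝ) 1 1 (-1))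
      (-1 : Matrix (Fin 1) (Fin 1) ℝ))) *
  blkdiag (n := n) (1 : Matrix (Fin (n / 2)) (Fin (n / 2)) ℝ) (Dmat (n / 2) * flipMat (n / 2))

/-- The rotation/rotation-reflection matrix `R_n`. -/
noncomputable def Rmat (n : ℕ) : Matrix (Fin n) (Fin n) ℝ :=
  blkdiag (n := n) (1 : Matrix (Fin (n / 2)) (Fin (n / 2)) ℝ) (Dmat (n / 2)) *
  blk4 (n := n)
    (Matrix.diagonal fun k : Fin (n / 2) =>
      Real.cos (((2 * k.val + 1 : ℕ) : ℝ) * Real.pi / (4 * n)))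
    ((Matrix.diagonal fun k : Fin (n / 2) =>
      Real.sin (((2 * k.val + 1 : ℕ) : ℝ) * Real.pi / (4 * n))) * flipMat (n / 2))
    (-(flipMat (n / 2) * Matrix.diagonal fun k : Fin (n / 2) =>
      Real.sin (((2 * k.val + 1 : ℕ) : ℝ) * Real.pi / (4 * n))))
    (Matrix.diagonal fun k : Fin (n / 2) =>
      Real.cos (((2 * (n / 2 - 1 - k.val) + 1 : ℕ) : ℝ) * Real.pi / (4 * n)))

/-! Write `n = 2m`. On the columns `k ≤ m`, row `2t` of `C^I_{2m+1}` is row `t` of `C^I_{m+1}`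
(the angle `2tkπ/2m` is `tkπ/m`) and row `2t+1` is row `t` of `C^III_m`; the normalisation
`√(2/2m) = √(2/m)/√2` produces the `1/√2` of `Ĥ`. Columns `k > m` are reduced to column
`2m - k` by `cos(j(2m-k)π/2m) = (-1)^j cos(jkπ/2m)`: the sign `(-1)^j` is `+` on the even rows
and `-` on the odd ones, which is the sign pattern of the right-hand blocks of `Ĥ`. -/

lemma eps_add_self_two_mul (m t : ℕ) : eps (m + m) (2 * t) = eps m t := by
  unfold eps; split_ifs <;> first | rfl | omega

lemma eps_add_self_of_lt {m k : ℕ} (hk : k < m) : eps (m + m) k = eps m k := by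
  unfold eps; split_ifs <;> first | rfl | omega

lemma eps_of_ne {m k : ℕ} (h₀ : k ≠ 0) (hm : k ≠ m) : eps m k = 1 := by
  simp [eps, h₀, hm]

lemma eps_self (m : ℕ) : eps m m = 1 / √2 := by
  simp [eps]

lemma eps_self_sub {N k : ℕ} (hk : k ≤ N) : eps N (N - k) = eps N k := by
  unfold eps; split_ifs <;> first | rfl | omega

lemma sqrt_two_div_add_self {m : ℕ} :
    √(2 / ((m + m : ℕ) : ℝ)) = √(2 / m) / √2 := by
  rw [← Real.sqrt_div' _ zero_le_two]
  congr 1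
  push_cast
  ring

lemma C1_apply_of_add_eq {N : ℕ} (j k k' : Fin (N + 1)) (hk : k.val + k'.val = N) :
    C1 N j k' = (-1) ^ j.val * C1 N j k := by
  have hk' : k'.val = N - k.val := by omega
  have hangle : ((j.val * k'.val : ℕ) : ℝ) * π / N
      = (j.val : ℕ) * π - ((j.val * k.val : ℕ) : ℝ) * π / N := by
    rcases Nat.eq_zero_or_pos N with rfl | hN
    · simp
    · rw [hk']
      push_cast [Nat.cast_sub (show k.val ≤ N by omega)]
      field_simp
  simp only [C1]
  rw [hangle, Real.cos_sub, Real.cos_nat_mul_pi, Real.sin_nat_mul_pi, hk',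
    eps_self_sub (by omega)]
  ring

section DoubleSize

variable {m : ℕ}

lemma C1_add_self_apply_even_of_lt {t k : ℕ} (ht : t ≤ m) (hk : k < m) :
    C1 (m + m) ⟨2 * t, by omega⟩ ⟨k, by omega⟩
      = C1 m ⟨t, by omega⟩ ⟨k, by omega⟩ / √2 := by
  have hangle :
      ((2 * t * k : ℕ) : ℝ) * π / ((m + m : ℕ) : ℝ) = ((t * k : ℕ) : ℝ) * π / m := by
    have hm : (m : ℝ) ≠ 0 := by exact_mod_cast (by omega : m ≠ 0)
    push_cast
    field_simp
    ring
  simp only [C1]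
  rw [eps_add_self_two_mul, eps_add_self_of_lt hk, sqrt_two_div_add_self, hangle]
  ring

lemma C1_add_self_apply_even_self (hm : m ≠ 0) {t : ℕ} (ht : t ≤ m) :
    C1 (m + m) ⟨2 * t, by omega⟩ ⟨m, by omega⟩
      = C1 m ⟨t, by omega⟩ ⟨m, by omega⟩ := by
  have hangle :
      ((2 * t * m : ℕ) : ℝ) * π / ((m + m : ℕ) : ℝ) = ((t * m : ℕ) : ℝ) * π / m := by
    have hm : (m : ℝ) ≠ 0 := by exact_mod_cast hm
    push_cast
    field_simp
    ring
  simp only [C1]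
  rw [eps_add_self_two_mul, eps_of_ne hm (by omega), eps_self, sqrt_two_div_add_self, hangle]
  ring

lemma C1_add_self_apply_odd_of_lt {t k : ℕ} (ht : t < m) (hk : k < m) :
    C1 (m + m) ⟨2 * t + 1, by omega⟩ ⟨k, by omega⟩
      = C3 m ⟨t, ht⟩ ⟨k, hk⟩ / √2 := by
  have hangle : (((2 * t + 1) * k : ℕ) : ℝ) * π / ((m + m : ℕ) : ℝ)
      = ((k * (2 * t + 1) : ℕ) : ℝ) * π / (2 * m) := by
    push_cast
    ring
  simp only [C1, C3, C2, transpose_apply]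
  rw [eps_of_ne (by omega) (by omega), eps_add_self_of_lt hk, sqrt_two_div_add_self, hangle]
  ring

lemma C1_add_self_apply_odd_self {t : ℕ} (ht : t < m) :
    C1 (m + m) ⟨2 * t + 1, by omega⟩ ⟨m, by omega⟩ = 0 := by
  have hangle :
      (((2 * t + 1) * m : ℕ) : ℝ) * π / ((m + m : ℕ) : ℝ) = (t : ℕ) * π + π / 2 := by
    have hm : (m : ℝ) ≠ 0 := by exact_mod_cast (by omega : m ≠ 0)
    push_cast
    field_simp
    ring
  simp only [C1]
  rw [hangle, Real.cos_add_pi_div_two, Real.sin_nat_mul_pi]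
  ring

end DoubleSize

section BlockDiagonal

variable {n p q : ℕ} (A : Matrix (Fin p) (Fin p) ℝ) (B : Matrix (Fin q) (Fin q) ℝ)

lemma blkdiag_apply₁₁ {i j : ℕ} (hi : i < p) (hj : j < p) (hi' : i < n) (hj' : j < n) :
    blkdiag A B ⟨i, hi'⟩ ⟨j, hj'⟩ = A ⟨i, hi⟩ ⟨j, hj⟩ := by
  simp [blkdiag, hi, hj]

lemma blkdiag_apply₁₂ {i j : ℕ} (hi : i < p) (hj : p ≤ j) (hi' : i < n) (hj' : j < n) :
    blkdiag A B ⟨i, hi'⟩ ⟨j, hj'⟩ = 0 := by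
  simp [blkdiag, hi, hj.not_gt]

lemma blkdiag_apply₂₁ {i j : ℕ} (hi : p ≤ i) (hj : j < p) (hi' : i < n) (hj' : j < n) :
    blkdiag A B ⟨i, hi'⟩ ⟨j, hj'⟩ = 0 := by
  simp [blkdiag, hi.not_gt, hj]

lemma blkdiag_apply₂₂ {i j : ℕ} (hi : i < q) (hj : j < q) (hi' : p + i < n)
    (hj' : p + j < n) :
    blkdiag A B ⟨p + i, hi'⟩ ⟨p + j, hj'⟩ = B ⟨i, hi⟩ ⟨j, hj⟩ := by
  simp [blkdiag, hi, hj]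

end BlockDiagonal

section EvenOddPermutation

variable {m : ℕ} (A : Matrix (Fin (m + m + 1)) (Fin (m + m + 1)) ℝ)

lemma Podd_transpose_mul_apply_even {t : ℕ} (ht : t ≤ m) (k : Fin (m + m + 1)) :
    ((Podd (m + m))ᵀ * A) ⟨2 * t, by omega⟩ k = A ⟨t, by omega⟩ k := by
  rw [mul_apply, Finset.sum_eq_single_of_mem ⟨t, by omega⟩ (Finset.mem_univ _)]
  · simp [Podd, show t ≤ (m + m) / 2 by omega]
  · intro b _ hb
    have hb' : b.val ≠ t := fun h => hb (Fin.ext h)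
    simp only [transpose_apply, Podd]
    split_ifs <;> first | omega | simp

lemma Podd_transpose_mul_apply_odd {t : ℕ} (ht : t < m) (k : Fin (m + m + 1)) :
    ((Podd (m + m))ᵀ * A) ⟨2 * t + 1, by omega⟩ k = A ⟨m + 1 + t, by omega⟩ k := by
  rw [mul_apply, Finset.sum_eq_single_of_mem ⟨m + 1 + t, by omega⟩ (Finset.mem_univ _)]
  · simp only [transpose_apply, Podd]
    split_ifs <;> first | omega | simp
  · intro b _ hb
    have hb' : b.val ≠ m + 1 + t := fun h => hb (Fin.ext h)
    simp only [transpose_apply, Podd]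
    split_ifs <;> first | omega | simp

end EvenOddPermutation

section Butterfly

variable {m : ℕ} (B : Matrix (Fin (m + m + 1)) (Fin (m + m + 1)) ℝ) (i : Fin (m + m + 1))

lemma mul_Hbrev_apply_of_lt {k : ℕ} (hk : k < m) :
    (B * Hbrev (m + m)) i ⟨k, by omega⟩
      = (B i ⟨k, by omega⟩ + B i ⟨m + 1 + k, by omega⟩) / √2 := by
  rw [mul_apply, Finset.sum_eq_add_of_mem ⟨k, by omega⟩ ⟨m + 1 + k, by omega⟩
    (Finset.mem_univ _) (Finset.mem_univ _) (by rw [Ne, Fin.mk.injEq]; omega)]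
  · simp only [Hbrev]
    split_ifs <;> first | omega | ring
  · intro b _ ⟨hb₁, hb₂⟩
    have hb₁' : b.val ≠ k := fun h => hb₁ (Fin.ext h)
    have hb₂' : b.val ≠ m + 1 + k := fun h => hb₂ (Fin.ext h)
    simp only [Hbrev]
    split_ifs <;> first | omega | simp

lemma mul_Hbrev_apply_self : (B * Hbrev (m + m)) i ⟨m, by omega⟩ = B i ⟨m, by omega⟩ := by
  rw [mul_apply, Finset.sum_eq_single_of_mem ⟨m, by omega⟩ (Finset.mem_univ _)]
  · simp [Hbrev, show (m + m) / 2 = m by omega]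
  · intro b _ hb
    have hb' : b.val ≠ m := fun h => hb (Fin.ext h)
    simp only [Hbrev]
    split_ifs <;> first | omega | simp

lemma mul_Hbrev_apply_of_gt {k : ℕ} (hk : m < k) (hk' : k ≤ m + m) :
    (B * Hbrev (m + m)) i ⟨k, by omega⟩
      = (B i ⟨m + m - k, by omega⟩ - B i ⟨m + 1 + (m + m - k), by omega⟩) / √2 := by
  rw [mul_apply, Finset.sum_eq_add_of_mem ⟨m + m - k, by omega⟩
    ⟨m + 1 + (m + m - k), by omega⟩ (Finset.mem_univ _) (Finset.mem_univ _)
    (by rw [Ne, Fin.mk.injEq]; omega)]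
  · simp only [Hbrev]
    split_ifs <;> first | omega | ring
  · intro b _ ⟨hb₁, hb₂⟩
    have hb₁' : b.val ≠ m + m - k := fun h => hb₁ (Fin.ext h)
    have hb₂' : b.val ≠ m + 1 + (m + m - k) := fun h => hb₂ (Fin.ext h)
    simp only [Hbrev]
    split_ifs <;> first | omega | simp

end Butterfly

section Rows

variable {m : ℕ}

lemma C1_add_self_row_even (hm : m ≠ 0) {t : ℕ} (ht : t ≤ m) (k : Fin (m + m + 1)) :
    C1 (m + m) ⟨2 * t, by omega⟩ k
      = (blkdiag (n := m + m + 1) (C1 m) (C3 m) * Hbrev (m + m)) ⟨t, by omega⟩ k := by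
  have ht' : t < m + 1 := Nat.lt_add_one_of_le ht
  obtain ⟨k, hk⟩ := k
  rcases lt_trichotomy k m with hlt | rfl | hgt
  · rw [mul_Hbrev_apply_of_lt _ _ hlt, blkdiag_apply₁₁ _ _ ht' (Nat.lt_add_one_of_lt hlt),
      blkdiag_apply₁₂ _ _ ht' (Nat.le_add_right _ _), C1_add_self_apply_even_of_lt ht hlt]
    ring
  · rw [mul_Hbrev_apply_self, blkdiag_apply₁₁ _ _ ht' (Nat.lt_add_one _),
      C1_add_self_apply_even_self hm ht]
  · have hr : m + m - k < m := by omega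
    rw [C1_apply_of_add_eq _ ⟨m + m - k, by omega⟩ _ (by dsimp only; omega),
      mul_Hbrev_apply_of_gt _ _ hgt (by omega),
      blkdiag_apply₁₁ _ _ ht' (Nat.lt_add_one_of_lt hr),
      blkdiag_apply₁₂ _ _ ht' (Nat.le_add_right _ _), C1_add_self_apply_even_of_lt ht hr,
      pow_mul, neg_one_sq, one_pow]
    ring

lemma C1_add_self_row_odd {t : ℕ} (ht : t < m) (k : Fin (m + m + 1)) :
    C1 (m + m) ⟨2 * t + 1, by omega⟩ k
      = (blkdiag (n := m + m + 1) (C1 m) (C3 m) * Hbrev (m + m)) ⟨m + 1 + t, by omega⟩ k := by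
  have ht' : m + 1 ≤ m + 1 + t := Nat.le_add_right _ _
  obtain ⟨k, hk⟩ := k
  rcases lt_trichotomy k m with hlt | rfl | hgt
  · rw [mul_Hbrev_apply_of_lt _ _ hlt, blkdiag_apply₂₁ _ _ ht' (Nat.lt_add_one_of_lt hlt),
      blkdiag_apply₂₂ _ _ ht hlt, C1_add_self_apply_odd_of_lt ht hlt]
    ring
  · rw [mul_Hbrev_apply_self, blkdiag_apply₂₁ _ _ ht' (Nat.lt_add_one _),
      C1_add_self_apply_odd_self ht]
  · have hr : m + m - k < m := by omega
    rw [C1_apply_of_add_eq _ ⟨m + m - k, by omega⟩ _ (by dsimp only; omega),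
      mul_Hbrev_apply_of_gt _ _ hgt (by omega),
      blkdiag_apply₂₁ _ _ ht' (Nat.lt_add_one_of_lt hr),
      blkdiag_apply₂₂ _ _ ht hr, C1_add_self_apply_odd_of_lt ht hr,
      pow_succ, pow_mul, neg_one_sq, one_pow]
    ring

end Rows

theorem dct1_factorization (n : ℕ) (hn : 4 ≤ n) (hev : Even n) :
    C1 n = (Podd n)ᵀ * blkdiag (C1 (n / 2)) (C3 (n / 2)) * Hbrev n := by
  obtain ⟨m, rfl⟩ := hev
  have hm : m ≠ 0 := by omega
  rw [show (m + m) / 2 = m by omega, Matrix.mul_assoc]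
  ext ⟨j, hj⟩ k
  obtain ⟨t, rfl | rfl⟩ := Nat.even_or_odd' j
  · rw [Podd_transpose_mul_apply_even _ (by omega), C1_add_self_row_even hm (by omega)]
  · rw [Podd_transpose_mul_apply_odd _ (by omega), C1_add_self_row_odd (by omega)]
end

section
/- Let a : ℕ → ℝ satisfy a(1) = 2, a(2) = 8, and the recurrence a(t) = a(t−1) + 2·a(t−2) + 2^{t+1} − 2 for all t ≥ 3. Then for all t ≥ 1, a(t) = (4/3)·t·2^t − (8/9)·2^t − (1/9)·(−1)^t + 1. (This is the addition count of the recursive radix-2 DCT-II algorithm of length n = 2^t.) -/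
/-!
The characteristic polynomial `x² - x - 2 = (x - 2)(x + 1)` of the recurrence has roots `2` and
`-1`; since `2` is a root, the forcing term `2^(t+1)` calls for the particular solution
`(4/3) t 2^t`, and the constant `-2` for the constant `1`. The closed form is this particular
solution plus the homogeneous part `-(8/9) 2^t - (1/9) (-1)^t` fitted to `a 1 = 2`, `a 2 = 8`;
a second-order recurrence has only one solution with given first two values.
-/

theorem eq_of_second_order_recurrence {α : Type*} {a b : ℕ → α} (F : ℕ → α → α → α)
    (ha : ∀ t, 3 ≤ t → a t = F t (a (t - 1)) (a (t - 2)))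
    (hb : ∀ t, 3 ≤ t → b t = F t (b (t - 1)) (b (t - 2)))
    (h1 : a 1 = b 1) (h2 : a 2 = b 2) :
    ∀ t, 1 ≤ t → a t = b t := by
  have pair : ∀ n, a (n + 1) = b (n + 1) ∧ a (n + 2) = b (n + 2) := by
    intro n
    induction n with
    | zero => exact ⟨h1, h2⟩
    | succ n ih =>
      refine ⟨ih.2, ?_⟩
      rw [ha (n + 3) (by omega), hb (n + 3) (by omega)]
      exact congrArg₂ (F (n + 3)) ih.2 ih.1
  intro t ht
  obtain ⟨n, rfl⟩ : ∃ n, t = n + 1 := ⟨t - 1, by omega⟩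
  exact (pair n).1

noncomputable def dct2AdditionClosedForm (t : ℕ) : ℝ :=
  4 / 3 * t * 2 ^ t - 8 / 9 * 2 ^ t - 1 / 9 * (-1 : ℝ) ^ t + 1

theorem dct2AdditionClosedForm_recurrence (t : ℕ) (ht : 3 ≤ t) :
    dct2AdditionClosedForm t = dct2AdditionClosedForm (t - 1) +
      2 * dct2AdditionClosedForm (t - 2) + 2 ^ (t + 1) - 2 := by
  obtain ⟨n, rfl⟩ : ∃ n, t = n + 2 := ⟨t - 2, by omega⟩
  obtain ⟨m, rfl⟩ : ∃ m, n = m + 1 := ⟨n - 1, by omega⟩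
  simp only [dct2AdditionClosedForm, Nat.add_sub_cancel]
  push_cast
  ring

/-- Addition count of the recursive radix-2 DCT-II algorithm of length `n = 2^t`. -/
theorem dct2_addition_count (a : ℕ → ℝ) (h1 : a 1 = 2) (h2 : a 2 = 8)
    (hrec : ∀ t : ℕ, 3 ≤ t → a t = a (t - 1) + 2 * a (t - 2) + 2 ^ (t + 1) - 2) :
    ∀ t : ℕ, 1 ≤ t →
      a t = 4 / 3 * t * 2 ^ t - 8 / 9 * 2 ^ t - 1 / 9 * (-1 : ℝ) ^ t + 1 := by
  refine eq_of_second_order_recurrence (fun t x y => x + 2 * y + 2 ^ (t + 1) - 2) hrec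
    dct2AdditionClosedForm_recurrence ?_ ?_
  · norm_num [h1, dct2AdditionClosedForm]
  · norm_num [h2, dct2AdditionClosedForm]
end

section
/- Let m : ℕ → ℝ satisfy m(1) = 2, m(2) = 10, and the recurrence m(t) = m(t−1) + 2·m(t−2) + 5·2^{t−1} − 2 for all t ≥ 3. Then for all t ≥ 1, m(t) = (5/3)·t·2^t − (10/9)·2^t + (1/9)·(−1)^t + 1. (This is the multiplication count of the recursive radix-2 DCT-II algorithm of length n = 2^t.) -/
/-!
The closed form is a particular solution `(5/3) t 2^t - (10/9) 2^t + 1` of the inhomogeneous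
recurrence plus the multiple `(1/9) (-1)^t` of a solution of the homogeneous one, whose
characteristic roots are `2` and `-1`. It satisfies the recurrence and the two initial values,
and a second-order recurrence determines a sequence from two consecutive values.
-/

theorem Nat.eq_of_two_step_recurrence {α : Type*} {u v : ℕ → α} (F : ℕ → α → α → α)
    (hu : ∀ t, u (t + 2) = F t (u (t + 1)) (u t)) (hv : ∀ t, v (t + 2) = F t (v (t + 1)) (v t))
    (h₀ : u 0 = v 0) (h₁ : u 1 = v 1) : u = v := by
  have hpair : ∀ t, u t = v t ∧ u (t + 1) = v (t + 1) := by
    intro t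
    induction t with
    | zero => exact ⟨h₀, h₁⟩
    | succ t ih => exact ⟨ih.2, by rw [hu, hv, ih.1, ih.2]⟩
  exact funext fun t => (hpair t).1

noncomputable def dct2MultiplicationClosedForm (t : ℕ) : ℝ :=
  5 / 3 * t * 2 ^ t - 10 / 9 * 2 ^ t + 1 / 9 * (-1 : ℝ) ^ t + 1

theorem dct2MultiplicationClosedForm_add_two (t : ℕ) :
    dct2MultiplicationClosedForm (t + 2) = dct2MultiplicationClosedForm (t + 1) +
      2 * dct2MultiplicationClosedForm t + 5 * 2 ^ (t + 1) - 2 := by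
  simp only [dct2MultiplicationClosedForm]
  push_cast
  ring

/-- Multiplication count of the recursive radix-2 DCT-II algorithm of length `n = 2^t`. -/
theorem dct2_multiplication_count (m : ℕ → ℝ) (h1 : m 1 = 2) (h2 : m 2 = 10)
    (hrec : ∀ t : ℕ, 3 ≤ t → m t = m (t - 1) + 2 * m (t - 2) + 5 * 2 ^ (t - 1) - 2) :
    ∀ t : ℕ, 1 ≤ t →
      m t = 5 / 3 * t * 2 ^ t - 10 / 9 * 2 ^ t + 1 / 9 * (-1 : ℝ) ^ t + 1 := by
  have hshift : (fun t => m (t + 1)) = fun t => dct2MultiplicationClosedForm (t + 1) := by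
    refine Nat.eq_of_two_step_recurrence (fun t a b => a + 2 * b + 5 * 2 ^ (t + 2) - 2)
      (fun t => hrec (t + 3) (by omega)) (fun t => dct2MultiplicationClosedForm_add_two (t + 1))
      ?_ ?_
    · simp only [h1, dct2MultiplicationClosedForm]; norm_num
    · simp only [h2, dct2MultiplicationClosedForm]; norm_num
  intro t ht
  obtain ⟨s, rfl⟩ := Nat.exists_eq_add_of_le' ht
  exact congrFun hshift s
end

section
/- Let a : ℕ → ℝ satisfy a(1) = 2 and the recurrence a(t) = a(t−1) + [(4/3)·(t−1)·2^{t−1} − (2/9)·2^{t−1} + (2/9)·(−1)^{t−1}] + 2^t for all t ≥ 2. Then for all t ≥ 1, a(t) = (4/3)·t·2^t − (8/9)·2^t − (1/9)·(−1)^t + 1. (This is the addition count of the recursive radix-2 DCT-III algorithm of length n = 2^t, which equals the addition count of the DCT-II algorithm of the same length.) -/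
theorem eq_of_eq_of_forall_succ_sub_eq {G : Type*} [AddGroup G] {a b : ℕ → G} {m : ℕ}
    (hm : a m = b m) (hstep : ∀ n, m ≤ n → a (n + 1) - a n = b (n + 1) - b n) :
    ∀ n, m ≤ n → a n = b n := by
  intro n hn
  induction n, hn using Nat.le_induction with
  | base => exact hm
  | succ n hn ih => simpa [ih] using hstep n hn

/-- Addition count of the recursive radix-2 DCT-III algorithm of length `n = 2^t`. -/
theorem dct3_addition_count (a : ℕ → ℝ) (h1 : a 1 = 2)
    (hrec : ∀ t : ℕ, 2 ≤ t →
      a t = a (t - 1) + (4 / 3 * ((t : ℝ) - 1) * 2 ^ (t - 1) - 2 / 9 * 2 ^ (t - 1)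
        + 2 / 9 * (-1 : ℝ) ^ (t - 1)) + 2 ^ t) :
    ∀ t : ℕ, 1 ≤ t →
      a t = 4 / 3 * t * 2 ^ t - 8 / 9 * 2 ^ t - 1 / 9 * (-1 : ℝ) ^ t + 1 := by
  refine eq_of_eq_of_forall_succ_sub_eq (by rw [h1]; norm_num) fun n hn => ?_
  have hstep := hrec (n + 1) (by omega)
  rw [Nat.add_sub_cancel] at hstep
  rw [hstep]
  push_cast
  ring
end

section
/- Let a : ℕ → ℝ satisfy a(1) = 4 and the recurrence a(t) − a(t−1) = (2/3)·t·2^t − (1/9)·2^t + (1/9)·(−1)^t + 1 for all t ≥ 2. Then for all t ≥ 1, a(t) = (4/3)·t·2^t − (14/9)·2^t + (1/18)·(−1)^t + t + 7/2. (This is the addition count of the recursive radix-2 DCT-I algorithm of length n + 1 = 2^t + 1.) -/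
theorem eq_of_eq_of_sub_pred_eq {G : Type*} [AddGroup G] {a b : ℕ → G} {m : ℕ} (hm : a m = b m)
    (hdiff : ∀ t, m < t → a t - a (t - 1) = b t - b (t - 1)) : ∀ t, m ≤ t → a t = b t := by
  intro t ht
  induction t, ht using Nat.le_induction with
  | base => exact hm
  | succ n hn ih =>
    have h := hdiff (n + 1) (by omega)
    rw [Nat.add_sub_cancel, ih] at h
    simpa using h

/-- Addition count of the recursive radix-2 DCT-I algorithm of length `n + 1 = 2^t + 1`. -/
theorem dct1_addition_count (a : ℕ → ℝ) (h1 : a 1 = 4)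
    (hrec : ∀ t : ℕ, 2 ≤ t →
      a t - a (t - 1) = 2 / 3 * t * 2 ^ t - 1 / 9 * 2 ^ t + 1 / 9 * (-1 : ℝ) ^ t + 1) :
    ∀ t : ℕ, 1 ≤ t →
      a t = 4 / 3 * t * 2 ^ t - 14 / 9 * 2 ^ t + 1 / 18 * (-1 : ℝ) ^ t + t + 7 / 2 := by
  set closedForm : ℕ → ℝ := fun t ↦
    4 / 3 * t * 2 ^ t - 14 / 9 * 2 ^ t + 1 / 18 * (-1 : ℝ) ^ t + t + 7 / 2
  refine eq_of_eq_of_sub_pred_eq (b := closedForm) (by norm_num [h1, closedForm]) ?_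
  rintro t ht
  obtain ⟨s, rfl⟩ : ∃ s, t = s + 1 := ⟨t - 1, by omega⟩
  rw [hrec (s + 1) ht, Nat.add_sub_cancel]
  simp only [closedForm]
  push_cast
  ring
end

section
/- Let m : ℕ → ℝ satisfy m(1) = 5 and the recurrence m(t) − m(t−1) = (5/6)·t·2^t − (7/18)·2^t − (1/9)·(−1)^t + 1 for all t ≥ 2. Then for all t ≥ 1, m(t) = (5/3)·t·2^t − (22/9)·2^t − (1/18)·(−1)^t + t + 11/2. (This is the multiplication count of the recursive radix-2 DCT-I algorithm of length n + 1 = 2^t + 1.) -/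
theorem Nat.eq_of_eq_one_of_sub_pred_eq {G : Type*} [AddCommGroup G] {m f : ℕ → G} (h1 : m 1 = f 1)
    (hsub : ∀ t, 2 ≤ t → m t - m (t - 1) = f t - f (t - 1)) : ∀ t, 1 ≤ t → m t = f t := by
  intro t ht
  induction t, ht using Nat.le_induction with
  | base => exact h1
  | succ n hn ih =>
    have h := hsub (n + 1) (by omega)
    rw [Nat.add_sub_cancel, ih, sub_left_inj] at h
    exact h

noncomputable def dct1Count (t : ℕ) : ℝ :=
  5 / 3 * t * 2 ^ t - 22 / 9 * 2 ^ t - 1 / 18 * (-1 : ℝ) ^ t + t + 11 / 2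

theorem dct1Count_one : dct1Count 1 = 5 := by
  norm_num [dct1Count]

theorem dct1Count_sub_pred {t : ℕ} (ht : 1 ≤ t) :
    dct1Count t - dct1Count (t - 1) =
      5 / 6 * t * 2 ^ t - 7 / 18 * 2 ^ t - 1 / 9 * (-1 : ℝ) ^ t + 1 := by
  obtain ⟨n, rfl⟩ := Nat.exists_eq_add_of_le' ht
  simp only [dct1Count, Nat.add_sub_cancel]
  push_cast
  ring

/-- Multiplication count of the recursive radix-2 DCT-I algorithm of length `n + 1 = 2^t + 1`. -/
theorem dct1_multiplication_count (m : ℕ → ℝ) (h1 : m 1 = 5)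
    (hrec : ∀ t : ℕ, 2 ≤ t →
      m t - m (t - 1) = 5 / 6 * t * 2 ^ t - 7 / 18 * 2 ^ t - 1 / 9 * (-1 : ℝ) ^ t + 1) :
    ∀ t : ℕ, 1 ≤ t →
      m t = 5 / 3 * t * 2 ^ t - 22 / 9 * 2 ^ t - 1 / 18 * (-1 : ℝ) ^ t + t + 11 / 2 :=
  Nat.eq_of_eq_one_of_sub_pred_eq (f := dct1Count) (h1.trans dct1Count_one.symm)
    fun t ht => (hrec t ht).trans (dct1Count_sub_pred (by omega)).symm
end

section
/- For every even integer n ≥ 2, the DCT-I matrix C^I_{n+1} is its own inverse: C^I_{n+1} · C^I_{n+1} = I_{n+1}. -/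
/-!
Multiplying out `C1 n * C1 n` and using `cos a * cos b = (cos (a + b) + cos (a - b)) / 2`, each
entry becomes a combination of the sums `∑_{l ≤ n} ε_n(l)² cos (m l π / n)` with `m = j ± k`.
The weights `ε_n(l)²` halve the two end terms, so by the symmetry `l ↦ 2n - l` such a sum is half
the sum of `cos (m l π / n)` over a full period `l < 2n`: the real part of a geometric sum of
`2n`-th roots of unity, equal to `n` if `2n ∣ m` and to `0` otherwise. For `j, k ≤ n`,
`2n ∣ j - k` only when `j = k`, and `2n ∣ j + k` only at the corners `j = k ∈ {0, n}`, where the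
extra contribution is compensated by `ε_n(j)² = 1/2`.
-/

open Matrix Real

open Finset

theorem sum_range_cos_two_pi_mul_div {N : ℕ} (hN : N ≠ 0) (m : ℤ) :
    ∑ l ∈ range N, cos (2 * π * m * l / N) = if (N : ℤ) ∣ m then (N : ℝ) else 0 := by
  set ζ := Complex.exp (2 * π * Complex.I / N)
  have hζ : IsPrimitiveRoot ζ N := Complex.isPrimitiveRoot_exp N hN
  have hpow (l : ℕ) : (ζ ^ m) ^ l = Complex.exp ((2 * π * m * l / N : ℝ) * Complex.I) := by
    rw [← zpow_natCast, ← _root_.zpow_mul, ← Complex.exp_int_mul]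
    push_cast
    ring_nf
  have hre : ∑ l ∈ range N, cos (2 * π * m * l / N) = (∑ l ∈ range N, (ζ ^ m) ^ l).re := by
    simp only [Complex.re_sum, hpow, Complex.exp_ofReal_mul_I_re]
  rw [hre]
  split_ifs with hdvd
  · simp [(hζ.zpow_eq_one_iff_dvd m).mpr hdvd]
  · have hne : ζ ^ m ≠ 1 := fun h => hdvd ((hζ.zpow_eq_one_iff_dvd m).mp h)
    have hN1 : (ζ ^ m) ^ N = 1 := by
      rw [← zpow_natCast, ← _root_.zpow_mul, mul_comm, _root_.zpow_mul, zpow_natCast,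
        hζ.pow_eq_one, _root_.one_zpow]
    simp [geom_sum_eq hne, hN1]

theorem sum_range_two_mul_of_symm {M : Type*} [AddCommGroup M] (n : ℕ) (f : ℕ → M)
    (hf : ∀ l ≤ 2 * n, f (2 * n - l) = f l) :
    ∑ l ∈ range (2 * n), f l = 2 • ∑ l ∈ range (n + 1), f l - f 0 - f n := by
  have hsecond : ∑ l ∈ range n, f (n + l) = ∑ l ∈ range n, f (l + 1) := by
    rw [← sum_range_reflect]
    refine sum_congr rfl fun l hl => ?_
    have hl := mem_range.mp hl
    rw [← hf (l + 1) (by omega)]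
    congr 1
    omega
  have hlast : ∑ l ∈ range n, f (l + 1) = ∑ l ∈ range (n + 1), f l - f 0 := by
    rw [sum_range_succ']; abel
  rw [two_mul n, sum_range_add, hsecond, hlast, two_nsmul, sum_range_succ]
  abel

theorem two_mul_dvd_add_iff_of_le {n j k : ℕ} (hj : j ≤ n) (hk : k ≤ n) :
    2 * (n : ℤ) ∣ j + k ↔ j = 0 ∧ k = 0 ∨ j = n ∧ k = n := by
  constructor
  · intro h
    by_cases htop : j + k = 2 * n
    · omega
    · have := Int.eq_zero_of_abs_lt_dvd h (by rw [abs_of_nonneg (by positivity)]; omega)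
      omega
  · rintro (⟨rfl, rfl⟩ | ⟨rfl, rfl⟩)
    · simp
    · exact ⟨1, by ring⟩

theorem two_mul_dvd_sub_iff_of_le {n j k : ℕ} (hj : j ≤ n) (hk : k ≤ n) :
    2 * (n : ℤ) ∣ j - k ↔ j = k := by
  constructor
  · intro h
    by_contra hne
    have := Int.eq_zero_of_abs_lt_dvd h (by rw [abs_lt]; omega)
    omega
  · rintro rfl
    simp

theorem eps_sq (n j : ℕ) : eps n j ^ 2 = if j = 0 ∨ j = n then 1 / 2 else 1 := by
  unfold eps; split_ifs <;> simp

theorem sum_range_succ_eps_sq_mul {n : ℕ} (hn : n ≠ 0) (f : ℕ → ℝ) :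
    ∑ l ∈ range (n + 1), eps n l ^ 2 * f l = ∑ l ∈ range (n + 1), f l - (f 0 + f n) / 2 := by
  obtain ⟨k, rfl⟩ := Nat.exists_eq_succ_of_ne_zero hn
  have hmid : ∑ i ∈ range k, eps (k + 1) (i + 1) ^ 2 * f (i + 1) = ∑ i ∈ range k, f (i + 1) :=
    sum_congr rfl fun i hi => by
      rw [eps_sq, if_neg (by have := mem_range.mp hi; omega), one_mul]
  rw [sum_range_succ _ (k + 1), sum_range_succ' _ k, hmid, sum_range_succ _ (k + 1),
    sum_range_succ' _ k, eps_sq, eps_sq, if_pos (Or.inl rfl), if_pos (Or.inr rfl)]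
  ring

theorem sum_range_succ_eps_sq_mul_cos {n : ℕ} (hn : n ≠ 0) (m : ℤ) :
    ∑ l ∈ range (n + 1), eps n l ^ 2 * cos (m * l * π / n) =
      if 2 * (n : ℤ) ∣ m then (n : ℝ) else 0 := by
  set f : ℕ → ℝ := fun l => cos (m * l * π / n)
  have hsymm : ∀ l ≤ 2 * n, f (2 * n - l) = f l := fun l hl => by
    have hl : (m : ℝ) * ((2 * n - l : ℕ) : ℝ) * π / n = m * (2 * π) - m * l * π / n := by
      push_cast [Nat.cast_sub hl]
      field_simp
    simp only [f, hl, cos_int_mul_two_pi_sub]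
  have hperiod : ∑ l ∈ range (2 * n), f l = if 2 * (n : ℤ) ∣ m then (2 * n : ℝ) else 0 := by
    have h := sum_range_cos_two_pi_mul_div (N := 2 * n) (by omega) m
    push_cast at h
    rw [← h]
    refine sum_congr rfl fun l _ => congrArg cos ?_
    field_simp
  have hfold := sum_range_two_mul_of_symm n f hsymm
  rw [sum_range_succ_eps_sq_mul hn f]
  split_ifs at hperiod ⊢ with hdvd <;> rw [hperiod, two_nsmul] at hfold <;> linarith

theorem C1_mul_C1_apply {n : ℕ} (hn : n ≠ 0) (j k : Fin (n + 1)) :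
    (C1 n * C1 n) j k = eps n j * eps n k / n *
      (∑ l ∈ range (n + 1), eps n l ^ 2 * cos (((j : ℤ) + k : ℤ) * l * π / n) +
        ∑ l ∈ range (n + 1), eps n l ^ 2 * cos (((j : ℤ) - k : ℤ) * l * π / n)) := by
  have hsqrt : √(2 / n) * √(2 / n) = 2 / n := Real.mul_self_sqrt (by positivity)
  have hprod (a b : ℝ) : cos a * cos b = (cos (a + b) + cos (a - b)) / 2 := by
    rw [cos_add, cos_sub]; ring
  rw [← sum_add_distrib, mul_sum, mul_apply,
    ← Fin.sum_univ_eq_sum_range (fun l => eps n j * eps n k / n * (eps n l ^ 2 *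
      cos (((j : ℤ) + k : ℤ) * l * π / n) + eps n l ^ 2 * cos (((j : ℤ) - k : ℤ) * l * π / n)))]
  refine sum_congr rfl fun l _ => ?_
  have hn' : (n : ℝ) ≠ 0 := Nat.cast_ne_zero.mpr hn
  simp only [C1]
  calc _ = (√(2 / n) * √(2 / n)) * (eps n j * eps n k * eps n l ^ 2) *
        (cos ((j * l : ℕ) * π / n) * cos ((l * k : ℕ) * π / n)) := by ring
    _ = _ := by
      rw [hsqrt, hprod]
      push_cast
      field_simp

theorem dct1_self_inverse_general (n : ℕ) (hn : 2 ≤ n) :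
    C1 n * C1 n = 1 := by
  have hn0 : n ≠ 0 := by omega
  ext j k
  rw [C1_mul_C1_apply hn0, sum_range_succ_eps_sq_mul_cos hn0, sum_range_succ_eps_sq_mul_cos hn0,
    one_apply]
  simp only [two_mul_dvd_add_iff_of_le j.is_le k.is_le, two_mul_dvd_sub_iff_of_le j.is_le k.is_le,
    Fin.val_inj]
  by_cases hjk : j = k
  · subst hjk
    have hn' : (n : ℝ) ≠ 0 := Nat.cast_ne_zero.mpr hn0
    simp only [and_self, if_true, ← sq, eps_sq]
    split_ifs <;> field_simp <;> ring
  · have hend : ¬(j.val = 0 ∧ k.val = 0 ∨ j.val = n ∧ k.val = n) := by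
      rintro (⟨hj, hk⟩ | ⟨hj, hk⟩) <;> exact hjk (Fin.ext (by omega))
    simp only [hend, hjk, if_false]
    ring

theorem dct1_self_inverse (n : ℕ) (hn : 2 ≤ n) (hev : Even n) :
    C1 n * C1 n = 1 :=
  dct1_self_inverse_general n hn
end

section
/- For every integer n ≥ 2, the DCT-IV matrix C^IV_n is symmetric and is its own inverse: C^IV_n · C^IV_n = I_n. -/
open Matrix Real

/-!
By the product-to-sum formula, `2 cos a cos b = cos (a - b) + cos (a + b)`, the `(k, l)` entry of
`C4 n * C4 n` is `1/n` times the sum of the two sums `∑_{j<n} cos ((2j+1) mπ/(2n))` for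
`m = k - l` and `m = k + l + 1`. Telescoping `2 sin θ cos ((2j+1)θ) = sin ((2j+2)θ) - sin (2jθ)`
gives `2 sin θ ∑_{j<n} cos ((2j+1)θ) = sin (2nθ)`, which is `sin (mπ) = 0` at `θ = mπ/(2n)`; as
`sin θ ≠ 0` for `0 < |m| < 2n`, only the term `m = k - l = 0` on the diagonal survives, and it
equals `n`.
-/

namespace Real

open Finset

theorem two_mul_sin_mul_sum_cos_odd_mul (n : ℕ) (θ : ℝ) :
    2 * sin θ * ∑ j ∈ range n, cos ((2 * j + 1) * θ) = sin (2 * n * θ) := by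
  induction n with
  | zero => simp
  | succ n ih =>
    rw [sum_range_succ, mul_add, ih, two_mul_sin_mul_cos,
      show θ - (2 * (n : ℝ) + 1) * θ = -(2 * n * θ) by ring, sin_neg]
    push_cast
    ring_nf

theorem sum_cos_odd_mul_eq_zero {n : ℕ} {m : ℤ} (hm : m ≠ 0) (hm_lo : -(2 * n : ℤ) < m)
    (hm_hi : m < 2 * n) :
    ∑ j ∈ range n, cos ((2 * j + 1) * (m * π / (2 * n))) = 0 := by
  have hn : (0 : ℝ) < n := by exact_mod_cast (show (0 : ℤ) < n by omega)
  have hm_lo' : -(2 * n : ℝ) < m := by exact_mod_cast hm_lo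
  have hm_hi' : (m : ℝ) < 2 * n := by exact_mod_cast hm_hi
  have hsin : sin (m * π / (2 * n)) ≠ 0 := by
    rw [Ne, sin_eq_zero_iff_of_lt_of_lt]
    · exact div_ne_zero (mul_ne_zero (by exact_mod_cast hm) pi_ne_zero) (by positivity)
    · rw [lt_div_iff₀ (by positivity)]; nlinarith [pi_pos]
    · rw [div_lt_iff₀ (by positivity)]; nlinarith [pi_pos]
  have h := two_mul_sin_mul_sum_cos_odd_mul n (m * π / (2 * n))
  rw [show 2 * (n : ℝ) * (m * π / (2 * n)) = m * π by field_simp, sin_int_mul_pi] at h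
  exact (mul_eq_zero.mp h).resolve_left (mul_ne_zero two_ne_zero hsin)

theorem sum_cos_odd_mul_cos_odd_mul {n k l : ℕ} (hk : k < n) (hl : l < n) :
    ∑ j ∈ range n, cos ((2 * j + 1) * (2 * k + 1) * π / (4 * n)) *
        cos ((2 * j + 1) * (2 * l + 1) * π / (4 * n)) = if k = l then (n : ℝ) / 2 else 0 := by
  have hn : (n : ℝ) ≠ 0 := by exact_mod_cast (show n ≠ 0 by omega)
  have hprod : ∀ j : ℕ, 2 * (cos ((2 * j + 1) * (2 * k + 1) * π / (4 * n)) *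
      cos ((2 * j + 1) * (2 * l + 1) * π / (4 * n))) =
      cos ((2 * j + 1) * (((k - l : ℤ) : ℝ) * π / (2 * n))) +
        cos ((2 * j + 1) * (((k + l + 1 : ℤ) : ℝ) * π / (2 * n))) := by
    intro j
    rw [← mul_assoc, two_mul_cos_mul_cos]
    push_cast
    congr 2 <;> field_simp <;> ring
  have hsum : 2 * ∑ j ∈ range n, cos ((2 * j + 1) * (2 * k + 1) * π / (4 * n)) *
        cos ((2 * j + 1) * (2 * l + 1) * π / (4 * n)) =
      ∑ j ∈ range n, cos ((2 * j + 1) * (((k - l : ℤ) : ℝ) * π / (2 * n))) := by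
    rw [mul_sum, sum_congr rfl fun j _ => hprod j, sum_add_distrib,
      sum_cos_odd_mul_eq_zero (m := k + l + 1) (by omega) (by omega) (by omega), add_zero]
  split_ifs with hkl
  · subst hkl
    simp only [sub_self, Int.cast_zero, zero_mul, zero_div, mul_zero, cos_zero, sum_const,
      card_range, nsmul_eq_mul, mul_one] at hsum
    linarith
  · rw [sum_cos_odd_mul_eq_zero (by omega) (by omega) (by omega)] at hsum
    linarith

end Real

open Finset

theorem C4_apply (n : ℕ) (j k : Fin n) :
    C4 n j k = √(2 / n) * cos ((2 * j + 1) * (2 * k + 1) * π / (4 * n)) := by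
  simp only [C4]
  push_cast
  rfl

theorem C4_transpose (n : ℕ) : (C4 n)ᵀ = C4 n := by
  ext j k
  rw [transpose_apply, C4_apply, C4_apply, mul_comm (2 * (k : ℝ) + 1)]

theorem C4_mul_self (n : ℕ) : C4 n * C4 n = 1 := by
  ext k l
  have hn : (0 : ℝ) < n := by exact_mod_cast k.pos
  calc (C4 n * C4 n) k l
      = √(2 / n) * √(2 / n) * ∑ j ∈ range n, cos ((2 * j + 1) * (2 * k + 1) * π / (4 * n)) *
          cos ((2 * j + 1) * (2 * l + 1) * π / (4 * n)) := by
        rw [mul_apply, mul_sum, ← Fin.sum_univ_eq_sum_range]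
        refine sum_congr rfl fun j _ => ?_
        rw [← transpose_apply (C4 n), C4_transpose, C4_apply, C4_apply]
        ring
    _ = (1 : Matrix (Fin n) (Fin n) ℝ) k l := by
        rw [mul_self_sqrt (by positivity), sum_cos_odd_mul_cos_odd_mul k.isLt l.isLt, one_apply]
        simp only [Fin.val_inj]
        split_ifs
        · field_simp
        · simp

theorem dct4_symm_self_inverse_general (n : ℕ) :
    (C4 n)ᵀ = C4 n ∧ C4 n * C4 n = 1 :=
  ⟨C4_transpose n, C4_mul_self n⟩

theorem dct4_symm_self_inverse (n : ℕ) (hn : 2 ≤ n) :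
    (C4 n)ᵀ = C4 n ∧ C4 n * C4 n = 1 :=
  dct4_symm_self_inverse_general n
end

section
/- Let A_0, …, A_m and ΔA_0, …, ΔA_m be n×n real matrices and δ_0, …, δ_m ≥ 0 such that |ΔA_k| ≤ δ_k·|A_k| entrywise for all k. Then, entrywise, |∏_{k=0}^m (A_k + ΔA_k) − ∏_{k=0}^m A_k| ≤ (∏_{k=0}^m (1 + δ_k) − 1) · ∏_{k=0}^m |A_k|. -/
open Matrix

/-- Entrywise absolute value of a real matrix. -/
noncomputable def matAbs {n : ℕ} (M : Matrix (Fin n) (Fin n) ℝ) :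
    Matrix (Fin n) (Fin n) ℝ := fun i j => |M i j|

/-!
With `P = ∏ A_k`, `Q = ∏ (A_k + ΔA_k)`, `B = ∏ |A_k|` and `d = ∏ (1 + δ_k)`, induct on the number
of factors, prepending one factor at a time and carrying the entrywise bounds `|P| ≤ B` and
`|Q - P| ≤ (d - 1) B`. The step splits `(A + ΔA) Q - A P = (A + ΔA) (Q - P) + ΔA P` and bounds
the two terms by `(1 + δ)(d - 1) |A| B` and `δ |A| B`, which add up to `((1 + δ) d - 1) |A| B`.
-/

namespace Matrix

variable {ι R : Type*} [Fintype ι] [CommRing R] [LinearOrder R] [IsStrictOrderedRing R]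

theorem abs_mul_apply_le_of_abs_le {α β : Type*} {M M' : Matrix α ι R} {N N' : Matrix ι β R}
    (hM : ∀ i j, |M i j| ≤ M' i j) (hN : ∀ i j, |N i j| ≤ N' i j) (i : α) (j : β) :
    |(M * N) i j| ≤ (M' * N') i j := by
  simp only [mul_apply]
  refine (Finset.abs_sum_le_sum_abs _ _).trans (Finset.sum_le_sum fun k _ => ?_)
  rw [abs_mul]
  exact mul_le_mul (hM i k) (hN k j) (abs_nonneg _) ((abs_nonneg _).trans (hM i k))

theorem abs_list_prod_apply_le [DecidableEq ι] (l : List (Matrix ι ι R)) (i j : ι) :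
    |l.prod i j| ≤ (l.map fun M => M.map abs).prod i j := by
  induction l generalizing i j with
  | nil => by_cases hij : i = j <;> simp [hij]
  | cons M l ih => exact abs_mul_apply_le_of_abs_le (fun _ _ => le_rfl) ih i j

theorem abs_add_mul_sub_mul_apply_le {A ΔA P Q B : Matrix ι ι R} {δ d : R}
    (hΔA : ∀ i j, |ΔA i j| ≤ δ * |A i j|) (hP : ∀ i j, |P i j| ≤ B i j)
    (hQP : ∀ i j, |(Q - P) i j| ≤ (d - 1) * B i j) (i j : ι) :
    |((A + ΔA) * Q - A * P) i j| ≤ ((1 + δ) * d - 1) * (A.map abs * B) i j := by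
  have hAΔA : ∀ i j, |(A + ΔA) i j| ≤ ((1 + δ) • A.map abs) i j := fun i j =>
    calc |(A + ΔA) i j| ≤ |A i j| + |ΔA i j| := abs_add_le _ _
      _ ≤ (1 + δ) * |A i j| := by linarith [hΔA i j]
  have hΔA' : ∀ i j, |ΔA i j| ≤ (δ • A.map abs) i j := hΔA
  have hQP' : ∀ i j, |(Q - P) i j| ≤ ((d - 1) • B) i j := hQP
  have split : (A + ΔA) * Q - A * P = (A + ΔA) * (Q - P) + ΔA * P := by
    simp only [Matrix.mul_sub, Matrix.add_mul]
    abel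
  calc |((A + ΔA) * Q - A * P) i j|
      ≤ |((A + ΔA) * (Q - P)) i j| + |(ΔA * P) i j| := by
        rw [split, add_apply]
        exact abs_add_le _ _
    _ ≤ (((1 + δ) • A.map abs) * ((d - 1) • B)) i j + ((δ • A.map abs) * B) i j :=
        add_le_add (abs_mul_apply_le_of_abs_le hAΔA hQP' i j)
          (abs_mul_apply_le_of_abs_le hΔA' hP i j)
    _ = ((1 + δ) * d - 1) * (A.map abs * B) i j := by
        simp only [Matrix.smul_mul, Matrix.mul_smul, smul_apply, smul_eq_mul]
        ring

theorem abs_list_prod_add_sub_list_prod_apply_le [DecidableEq ι] {κ : Type*} (l : List κ)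
    (A ΔA : κ → Matrix ι ι R) (δ : κ → R)
    (h : ∀ k ∈ l, ∀ i j, |ΔA k i j| ≤ δ k * |A k i j|) (i j : ι) :
    |((l.map fun k => A k + ΔA k).prod - (l.map A).prod) i j| ≤
      ((l.map fun k => 1 + δ k).prod - 1) * (l.map fun k => (A k).map abs).prod i j := by
  induction l generalizing i j with
  | nil => simp
  | cons k l ih =>
    simp only [List.map_cons, List.prod_cons]
    refine abs_add_mul_sub_mul_apply_le (h k List.mem_cons_self) (fun i j => ?_)
      (ih fun k' hk' => h k' (List.mem_cons_of_mem k hk')) i j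
    have hP := abs_list_prod_apply_le (l.map A) i j
    rwa [List.map_map] at hP

end Matrix

theorem product_perturbation_bound_general (n m : ℕ)
    (A ΔA : ℕ → Matrix (Fin n) (Fin n) ℝ) (δ : ℕ → ℝ)
    (h : ∀ k, k ≤ m → ∀ i j, |ΔA k i j| ≤ δ k * |A k i j|) :
    ∀ i j,
      |(((List.range (m + 1)).map fun k => A k + ΔA k).prod i j)
          - (((List.range (m + 1)).map A).prod i j)|
        ≤ ((((List.range (m + 1)).map fun k => 1 + δ k).prod) - 1) *
            (((List.range (m + 1)).map fun k => matAbs (A k)).prod i j) :=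
  abs_list_prod_add_sub_list_prod_apply_le (List.range (m + 1)) A ΔA δ
    fun k hk => h k (Nat.lt_succ_iff.mp (List.mem_range.mp hk))

/-- Perturbation bound for a product of matrices (Higham):
if `|ΔA_k| ≤ δ_k |A_k|` entrywise for `k = 0, …, m`, then entrywise
`|∏ (A_k + ΔA_k) - ∏ A_k| ≤ (∏ (1 + δ_k) - 1) ∏ |A_k|`,
where products are taken in order of increasing index. -/
theorem product_perturbation_bound (n m : ℕ)
    (A ΔA : ℕ → Matrix (Fin n) (Fin n) ℝ) (δ : ℕ → ℝ)
    (hδ : ∀ k, k ≤ m → 0 ≤ δ k)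
    (h : ∀ k, k ≤ m → ∀ i j, |ΔA k i j| ≤ δ k * |A k i j|) :
    ∀ i j,
      |(((List.range (m + 1)).map fun k => A k + ΔA k).prod i j)
          - (((List.range (m + 1)).map A).prod i j)|
        ≤ ((((List.range (m + 1)).map fun k => 1 + δ k).prod) - 1) *
            (((List.range (m + 1)).map fun k => matAbs (A k)).prod i j) :=
  product_perturbation_bound_general n m A ΔA δ h
end
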